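/- arXiv:2510.20742 — 3 statements merged into one kernel-verified Lean document; each statement's English description precedes it below -/
import Mathlib

section
/- Let Q be a probability distribution on a finite set X with Q(x) > 0 for all x, and let A be a d×k real matrix and α a vector in R^d such that the affine constraint set E = {P in the open probability simplex : AP = α} is nonempty. Then the I-projection P* = argmin_{P ∈ E} D(P‖Q) (minimizing Kullback–Leibler divergence) exists, is unique, and satisfies P*(x) > 0 for all x. -/
/-!
Write `f_q(u) = u log (u / q)`, so that `KL P Q = ∑ₓ f_{Q x} (P x)`. Each `f_q` is continuous and
strictly convex on `[0, ∞)`, hence `KL · Q` has a minimiser `P` on the compact convex set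
`C = {P ≥ 0, ∑ P = 1, A P = α} ⊇ E`, and only one. The minimiser is strictly positive because
`f_q` has slope `-∞` at `0`: if `P x₀ = 0`, moving from `P` towards a strictly positive `P₀ ∈ E` by
`t` changes the coordinate `x₀` by `t P₀ x₀ log t + O(t)` and every other coordinate by `O(t)`
(convexity), which is negative for small `t`. So `P ∈ E`, and any minimiser over `E` also
minimises over `C`, hence equals `P`.
-/

open Real Finset Matrix

/-- Kullback–Leibler divergence on a finite set. -/
noncomputable def KL {k : ℕ} (P Q : Fin k → ℝ) : ℝ :=
  ∑ x, P x * Real.log (P x / Q x)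

open Set Filter Topology

lemma mul_log_div_eq (u : ℝ) {q : ℝ} (hq : q ≠ 0) : u * log (u / q) = u * log u - u * log q := by
  rcases eq_or_ne u 0 with rfl | hu
  · simp
  · rw [log_div hu hq, mul_sub]

lemma strictConvexOn_mul_log_div {q : ℝ} (hq : q ≠ 0) :
    StrictConvexOn ℝ (Ici 0) fun u => u * log (u / q) :=
  (strictConvexOn_mul_log.sub_concaveOn
    (((LinearMap.lsmul ℝ ℝ).flip (log q)).concaveOn (convex_Ici 0))).congr
    fun u _ => by simp [mul_log_div_eq u hq]

lemma continuous_mul_log_div {q : ℝ} (hq : q ≠ 0) : Continuous fun u => u * log (u / q) := by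
  simp_rw [mul_log_div_eq _ hq]
  fun_prop

lemma mul_log_div_of_mul {t : ℝ} (ht : 0 < t) (u : ℝ) {q : ℝ} (hq : q ≠ 0) :
    t * u * log (t * u / q) = t * (u * log (u / q)) + t * u * log t := by
  rcases eq_or_ne u 0 with rfl | hu
  · simp
  · rw [mul_div_assoc, log_mul ht.ne' (div_ne_zero hu hq)]
    ring

section KL

variable {k : ℕ} {Q : Fin k → ℝ}

lemma continuous_KL (hQ : ∀ x, Q x ≠ 0) : Continuous fun P => KL P Q :=
  continuous_finsetSum _ fun x _ => (continuous_mul_log_div (hQ x)).comp (continuous_apply x)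

lemma strictConvexOn_KL (hQ : ∀ x, Q x ≠ 0) : StrictConvexOn ℝ (Ici 0) fun P => KL P Q := by
  refine ⟨convex_Ici 0, fun P hP P' hP' hne a b ha hb hab => ?_⟩
  obtain ⟨x, hx⟩ := Function.ne_iff.1 hne
  simp only [KL, smul_eq_mul, mul_sum, ← sum_add_distrib, Pi.add_apply, Pi.smul_apply]
  refine sum_lt_sum (fun y _ => ?_) ⟨x, mem_univ x, ?_⟩
  · exact (strictConvexOn_mul_log_div (hQ y)).convexOn.2 (hP y) (hP' y) ha.le hb.le hab
  · exact (strictConvexOn_mul_log_div (hQ x)).2 (hP x) (hP' x) hx ha hb hab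

lemma pos_of_isMinOn_KL (hQ : ∀ x, Q x ≠ 0) {C : Set (Fin k → ℝ)} (hC : Convex ℝ C)
    (hC0 : C ⊆ Ici 0) {P₀ P : Fin k → ℝ} (hP₀ : P₀ ∈ C) (hP₀pos : ∀ x, 0 < P₀ x) (hP : P ∈ C)
    (hmin : IsMinOn (fun P => KL P Q) C P) (x₀ : Fin k) : 0 < P x₀ := by
  refine (hC0 hP x₀).lt_of_ne' fun h0 => ?_
  have hsmall : ∀ᶠ t in 𝓝[>] (0 : ℝ), t ∈ Set.Ioc 0 1 := Ioc_mem_nhdsGT one_pos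
  obtain ⟨t, ⟨ht0, ht1⟩, hlog⟩ := (hsmall.and ((tendsto_log_nhdsGT_zero.const_mul_atBot
    (hP₀pos x₀)).eventually (eventually_lt_atBot (KL P Q - KL P₀ Q)))).exists
  set Pt := (1 - t) • P + t • P₀
  have hcoord : ∀ x, Pt x * log (Pt x / Q x) - P x * log (P x / Q x) ≤
      t * (P₀ x * log (P₀ x / Q x) - P x * log (P x / Q x)) +
        if x = x₀ then t * P₀ x₀ * log t else 0 := by
    intro x
    split_ifs with hx
    · subst hx
      simp [Pt, h0, mul_log_div_of_mul ht0 _ (hQ x)]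
    · have := (strictConvexOn_mul_log_div (hQ x)).convexOn.2 (hC0 hP x) (hC0 hP₀ x)
        (sub_nonneg.2 ht1) ht0.le (sub_add_cancel 1 t)
      simp only [smul_eq_mul] at this
      simp only [Pt, Pi.add_apply, Pi.smul_apply, smul_eq_mul]
      linarith
  have hdecrease : KL Pt Q - KL P Q ≤ t * (KL P₀ Q - KL P Q + P₀ x₀ * log t) :=
    calc KL Pt Q - KL P Q = ∑ x, (Pt x * log (Pt x / Q x) - P x * log (P x / Q x)) :=
          (sum_sub_distrib ..).symm
      _ ≤ ∑ x, (t * (P₀ x * log (P₀ x / Q x) - P x * log (P x / Q x)) +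
          if x = x₀ then t * P₀ x₀ * log t else 0) := sum_le_sum fun x _ => hcoord x
      _ = t * (KL P₀ Q - KL P Q + P₀ x₀ * log t) := by
          rw [sum_add_distrib, ← mul_sum, sum_sub_distrib, sum_ite_eq' univ x₀,
            if_pos (Finset.mem_univ x₀)]
          unfold KL
          ring
  have hPt : Pt ∈ C := hC hP hP₀ (sub_nonneg.2 ht1) ht0.le (sub_add_cancel 1 t)
  have hle : KL P Q ≤ KL Pt Q := hmin hPt
  have : t * (KL P₀ Q - KL P Q + P₀ x₀ * log t) < 0 := mul_neg_of_pos_of_neg ht0 (by linarith)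
  linarith

end KL

theorem stmt_0_general {k d : ℕ}
    (Q : Fin k → ℝ) (hQpos : ∀ x, 0 < Q x)
    (A : Matrix (Fin d) (Fin k) ℝ) (α : Fin d → ℝ)
    (E : Set (Fin k → ℝ))
    (hE : E = {P | (∀ x, 0 < P x) ∧ (∑ x, P x = 1) ∧ A.mulVec P = α})
    (hne : E.Nonempty) :
    ∃! Pstar : Fin k → ℝ,
      Pstar ∈ E ∧ (∀ x, 0 < Pstar x) ∧ ∀ P ∈ E, KL Pstar Q ≤ KL P Q := by
  subst hE
  have hQ : ∀ x, Q x ≠ 0 := fun x => (hQpos x).ne'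
  set C := stdSimplex ℝ (Fin k) ∩ {P | A *ᵥ P = α}
  have hCconvex : Convex ℝ C :=
    (convex_stdSimplex ℝ _).inter ((convex_singleton α).linear_preimage A.mulVecLin)
  have hCcompact : IsCompact C :=
    (isCompact_stdSimplex ℝ _).inter_right (isClosed_eq (by fun_prop) continuous_const)
  have hC0 : C ⊆ Ici 0 := fun P hP => hP.1.1
  have hEC : {P | (∀ x, 0 < P x) ∧ (∑ x, P x = 1) ∧ A.mulVec P = α} ⊆ C :=
    fun P ⟨hpos, hsum, hA⟩ => ⟨⟨fun x => (hpos x).le, hsum⟩, hA⟩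
  obtain ⟨P₀, hP₀⟩ := hne
  obtain ⟨P, hPC, hPmin⟩ :=
    hCcompact.exists_isMinOn ⟨P₀, hEC hP₀⟩ (continuous_KL hQ).continuousOn
  have hPpos : ∀ x, 0 < P x := pos_of_isMinOn_KL hQ hCconvex hC0 (hEC hP₀) hP₀.1 hPC hPmin
  refine ⟨P, ⟨⟨hPpos, hPC.1.2, hPC.2⟩, hPpos, fun P' hP' => hPmin (hEC hP')⟩, ?_⟩
  rintro P' ⟨hP'E, -, hP'min⟩
  have hP'minC : IsMinOn (fun P => KL P Q) C P' := fun _ hP'' =>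
    (hP'min P ⟨hPpos, hPC.1.2, hPC.2⟩).trans (hPmin hP'')
  exact ((strictConvexOn_KL hQ).subset hC0 hCconvex).eq_of_isMinOn hP'minC hPmin (hEC hP'E) hPC

/-- Existence, uniqueness and strict positivity of the I-projection of `Q`
onto a nonempty affine subset `E` of the open probability simplex. -/
theorem stmt_0 {k d : ℕ} (hk : 2 ≤ k)
    (Q : Fin k → ℝ) (hQpos : ∀ x, 0 < Q x) (hQsum : ∑ x, Q x = 1)
    (A : Matrix (Fin d) (Fin k) ℝ) (α : Fin d → ℝ)
    (E : Set (Fin k → ℝ))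
    (hE : E = {P | (∀ x, 0 < P x) ∧ (∑ x, P x = 1) ∧ A.mulVec P = α})
    (hne : E.Nonempty) :
    ∃! Pstar : Fin k → ℝ,
      Pstar ∈ E ∧ (∀ x, 0 < Pstar x) ∧ ∀ P ∈ E, KL Pstar Q ≤ KL P Q :=
  stmt_0_general Q hQpos A α E hE hne
end

section
/- Under the assumptions guaranteeing existence of the I-projection P* of Q onto the affine set E = {P ∈ Δ_k° : AP = α}, there exists a Lagrange multiplier θ* ∈ R^d such that P*(x) = Q(x) exp(−θ*ᵀ A_x) / Z, where A_x denotes the x-th column of A and Z = Σ_y Q(y) exp(−θ*ᵀ A_y) is the normalizing constant. -/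
open Real Finset Matrix

/-!
At the minimiser `P*` of `D(· ‖ Q)` over `E`, which lies in the open simplex, the derivative of
`t ↦ D(P* + t v ‖ Q)` at `0` vanishes for every direction `v` with `∑ v = 0` and `A v = 0`.
As `∑ v = 0`, that derivative is `∑ v x log (P* x / Q x)`, so `log (P* / Q)` annihilates the
kernel of `A` augmented by a row of ones, hence lies in its row space:
`log (P* x / Q x) = a + cᵀ A_x`. Exponentiating and normalising gives the Gibbs form.
-/

theorem Matrix.exists_vecMul_eq_of_forall_mulVec_eq_zero {K m n : Type*} [Field K]
    [Fintype m] [Fintype n] (B : Matrix m n K) (g : n → K)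
    (h : ∀ v, B *ᵥ v = 0 → g ⬝ᵥ v = 0) : ∃ c : m → K, c ᵥ* B = g := by
  classical
  have hg : dotProductEquiv K n g ∈ (LinearMap.ker B.mulVecLin).dualAnnihilator :=
    (Submodule.mem_dualAnnihilator _).2 fun v hv => h v hv
  rw [← LinearMap.range_dualMap_eq_dualAnnihilator_ker] at hg
  obtain ⟨ψ, hψ⟩ := hg
  refine ⟨(dotProductEquiv K m).symm ψ, (dotProductEquiv K n).injective (LinearMap.ext fun v => ?_)⟩
  rw [← hψ, LinearMap.dualMap_apply, mulVecLin_apply, dotProductEquiv_apply_apply,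
    ← dotProduct_mulVec, ← dotProductEquiv_apply_apply, LinearEquiv.apply_symm_apply]

theorem eq_div_sum_of_eq_const_mul {ι : Type*} [Fintype ι] {P f : ι → ℝ} {a : ℝ}
    (hP : ∀ x, P x = a * f x) (hsum : ∑ x, P x = 1) (x : ι) : P x = f x / ∑ y, f y := by
  have hnorm : a * ∑ y, f y = 1 := by simpa only [hP, ← mul_sum] using hsum
  rw [hP, eq_div_iff (right_ne_zero_of_mul_eq_one hnorm)]
  linear_combination f x * hnorm

theorem eventually_forall_pos_add_mul {ι : Type*} [Finite ι] {P : ι → ℝ} (hP : ∀ x, 0 < P x)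
    (v : ι → ℝ) : ∀ᶠ t in nhds (0 : ℝ), ∀ x, 0 < P x + t * v x :=
  Filter.eventually_all.2 fun x =>
    continuousAt_const.eventually_lt (by fun_prop) (by simpa using hP x)

theorem hasDerivAt_mul_log_div {p q : ℝ} (hp : p ≠ 0) (hq : q ≠ 0) :
    HasDerivAt (fun y => y * log (y / q)) (log (p / q) + 1) p := by
  have hlog : HasDerivAt (fun y => log (y / q)) (1 / q / (p / q)) p :=
    ((hasDerivAt_id' p).div_const q).log (div_ne_zero hp hq)
  refine ((hasDerivAt_id' p).mul hlog).congr_deriv ?_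
  field_simp

theorem hasDerivAt_KL_add_smul {k : ℕ} {P Q : Fin k → ℝ} (hP : ∀ x, P x ≠ 0)
    (hQ : ∀ x, Q x ≠ 0) (v : Fin k → ℝ) :
    HasDerivAt (fun t : ℝ => KL (P + t • v) Q) (∑ x, v x * (log (P x / Q x) + 1)) 0 := by
  unfold KL
  refine HasDerivAt.fun_sum fun x _ => ?_
  have hline : HasDerivAt (fun t : ℝ => P x + t * v x) (v x) 0 := by
    simpa using ((hasDerivAt_id (0 : ℝ)).mul_const (v x)).const_add (P x)
  exact ((hasDerivAt_mul_log_div (hP x) (hQ x)).comp_of_eq 0 hline (by simp)).congr_deriv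
    (mul_comm _ _)

theorem sum_mul_log_div_eq_zero_of_isMinOn {k : ℕ} {P Q : Fin k → ℝ} {S : Set (Fin k → ℝ)}
    (hmin : IsMinOn (KL · Q) S P) (hP : ∀ x, P x ≠ 0) (hQ : ∀ x, Q x ≠ 0) {v : Fin k → ℝ}
    (hv : ∑ x, v x = 0) (hS : ∀ᶠ t in nhds (0 : ℝ), P + t • v ∈ S) :
    ∑ x, v x * log (P x / Q x) = 0 := by
  have hlocal : IsLocalMin (fun t : ℝ => KL (P + t • v) Q) 0 := by
    filter_upwards [hS] with t ht
    simpa using hmin ht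
  have hderiv := hlocal.hasDerivAt_eq_zero (hasDerivAt_KL_add_smul hP hQ v)
  simpa only [mul_add, mul_one, sum_add_distrib, hv, add_zero] using hderiv

def linearFamily {k d : ℕ} (A : Matrix (Fin d) (Fin k) ℝ) (α : Fin d → ℝ) :
    Set (Fin k → ℝ) :=
  {P | (∀ x, 0 < P x) ∧ ∑ x, P x = 1 ∧ A *ᵥ P = α}

theorem add_smul_mem_linearFamily {k d : ℕ} {A : Matrix (Fin d) (Fin k) ℝ} {α : Fin d → ℝ}
    {P v : Fin k → ℝ} (hP : P ∈ linearFamily A α) (hv : ∑ x, v x = 0) (hAv : A *ᵥ v = 0) :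
    ∀ᶠ t in nhds (0 : ℝ), P + t • v ∈ linearFamily A α := by
  obtain ⟨hPpos, hPsum, hPA⟩ := hP
  filter_upwards [eventually_forall_pos_add_mul hPpos v] with t ht
  refine ⟨fun x => ht x, ?_, ?_⟩
  · simp [sum_add_distrib, ← mul_sum, hPsum, hv]
  · simp [mulVec_add, mulVec_smul, hPA, hAv]

theorem exists_log_div_eq_of_isMinOn_linearFamily {k d : ℕ} {A : Matrix (Fin d) (Fin k) ℝ}
    {α : Fin d → ℝ} {P Q : Fin k → ℝ} (hmin : IsMinOn (KL · Q) (linearFamily A α) P)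
    (hP : P ∈ linearFamily A α) (hQ : ∀ x, Q x ≠ 0) :
    ∃ (a : ℝ) (c : Fin d → ℝ), ∀ x, log (P x / Q x) = a + ∑ i, c i * A i x := by
  set B := fromRows A (replicateRow Unit (1 : Fin k → ℝ))
  have horth : ∀ v, B *ᵥ v = 0 → (fun x => log (P x / Q x)) ⬝ᵥ v = 0 := by
    intro v hv
    have hAv : A *ᵥ v = 0 := funext fun i => congr_fun hv (Sum.inl i)
    have hsum : ∑ x, v x = 0 := by simpa [B, mulVec, dotProduct] using congr_fun hv (Sum.inr ())
    rw [dotProduct_comm]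
    exact sum_mul_log_div_eq_zero_of_isMinOn hmin (fun x => (hP.1 x).ne') hQ hsum
      (add_smul_mem_linearFamily hP hsum hAv)
  obtain ⟨c, hc⟩ := B.exists_vecMul_eq_of_forall_mulVec_eq_zero _ horth
  refine ⟨c (Sum.inr ()), c ∘ Sum.inl, fun x => ?_⟩
  rw [← congr_fun hc x]
  simp [B, vecMul, dotProduct, add_comm]

theorem stmt_1_general {k d : ℕ}
    (Q : Fin k → ℝ) (hQpos : ∀ x, 0 < Q x)
    (A : Matrix (Fin d) (Fin k) ℝ) (α : Fin d → ℝ)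
    (E : Set (Fin k → ℝ))
    (hE : E = {P | (∀ x, 0 < P x) ∧ (∑ x, P x = 1) ∧ A.mulVec P = α})
    (Pstar : Fin k → ℝ) (hPmem : Pstar ∈ E)
    (hPmin : ∀ P ∈ E, KL Pstar Q ≤ KL P Q) :
    ∃ θ : Fin d → ℝ, ∀ x : Fin k,
      Pstar x = Q x * Real.exp (-(∑ i, θ i * A i x)) /
        (∑ y, Q y * Real.exp (-(∑ i, θ i * A i y))) := by
  subst hE
  obtain ⟨a, c, hlog⟩ :=
    exists_log_div_eq_of_isMinOn_linearFamily hPmin hPmem fun x => (hQpos x).ne'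
  refine ⟨-c, eq_div_sum_of_eq_const_mul (a := exp a) (fun x => ?_) hPmem.2.1⟩
  calc Pstar x = Q x * exp (log (Pstar x / Q x)) := by
        rw [exp_log (div_pos (hPmem.1 x) (hQpos x)), mul_div_cancel₀ _ (hQpos x).ne']
    _ = exp a * (Q x * exp (-∑ i, (-c) i * A i x)) := by
        simp only [hlog x, exp_add, Pi.neg_apply, neg_mul, sum_neg_distrib, neg_neg]
        ring

/-- The I-projection onto an affine constraint set has exponential-tilt form:
`P*(x) = Q(x) exp(-θ*ᵀ A_x) / Z` with `Z = Σ_y Q(y) exp(-θ*ᵀ A_y)`. -/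
theorem stmt_1 {k d : ℕ} (hk : 2 ≤ k)
    (Q : Fin k → ℝ) (hQpos : ∀ x, 0 < Q x) (hQsum : ∑ x, Q x = 1)
    (A : Matrix (Fin d) (Fin k) ℝ) (α : Fin d → ℝ)
    (E : Set (Fin k → ℝ))
    (hE : E = {P | (∀ x, 0 < P x) ∧ (∑ x, P x = 1) ∧ A.mulVec P = α})
    (Pstar : Fin k → ℝ) (hPmem : Pstar ∈ E)
    (hPmin : ∀ P ∈ E, KL Pstar Q ≤ KL P Q) :
    ∃ θ : Fin d → ℝ, ∀ x : Fin k,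
      Pstar x = Q x * Real.exp (-(∑ i, θ i * A i x)) /
        (∑ y, Q y * Real.exp (-(∑ i, θ i * A i y))) :=
  stmt_1_general Q hQpos A α E hE Pstar hPmem hPmin
end

section
/- Let P be a probability distribution on a finite set X with p_min = min_x P(x) > 0, based on an urn of n items with composition exactly nP (each nP(x) a nonnegative integer). Let μ_hyp be the law of m draws without replacement from this urn (m ≤ n), and P^⊗m the law of m i.i.d. draws from P. Then the total variation distance satisfies ‖μ_hyp − P^⊗m‖_TV ≤ m(m−1)/(2 n p_min). -/
/-!
Write `aᵢ = #{j < i | x j = x i}` for the number of earlier draws of the type of the `i`-th one.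
The `i`-th factor of the without-replacement probability of `x` is
`(n P(xᵢ) - aᵢ) / (n - i) ≥ P(xᵢ) (1 - tᵢ)` with `tᵢ = aᵢ / (n P(xᵢ)) ≤ i / (n p_min)`,
so `∑ tᵢ ≤ m(m-1)/(2 n p_min) =: B`, and the Weierstrass product inequality
`∏ (1 - tᵢ) ≥ 1 - ∑ tᵢ` gives `μ_hyp ≥ (1 - B) P^⊗m` pointwise. Such a one-sided domination
between two probability vectors bounds their total variation distance by `B`; when `B > 1` it
reduces to `μ_hyp ≥ 0`.
-/

open Finset

/-- The law of `m` ordered draws without replacement from an urn of `n` items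
whose composition is exactly `n·P` (with `c x = n·P(x)` items of type `x`):
the probability of the ordered tuple `x` is
`∏_i (c(x_i) - #{j < i : x_j = x_i}) / (n - i)`. -/
noncomputable def hypLaw {k m n : ℕ} (c : Fin k → ℕ) (x : Fin m → Fin k) : ℝ :=
  ∏ i : Fin m,
    ((c (x i) : ℝ) -
        (Finset.univ.filter (fun j : Fin m => j < i ∧ x j = x i)).card) /
      ((n : ℝ) - (i : ℕ))

/-- The law of `m` i.i.d. draws from `P`. -/
noncomputable def iidLaw {k m : ℕ} (P : Fin k → ℝ) (x : Fin m → Fin k) : ℝ :=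
  ∏ i : Fin m, P (x i)

lemma one_sub_sum_le_prod_one_sub {ι : Type*} (s : Finset ι) {t : ι → ℝ}
    (ht₀ : ∀ i ∈ s, 0 ≤ t i) (ht₁ : ∀ i ∈ s, t i ≤ 1) :
    1 - ∑ i ∈ s, t i ≤ ∏ i ∈ s, (1 - t i) := by
  classical
  induction s using Finset.induction with
  | empty => simp
  | insert a s ha ih =>
    rw [sum_insert ha, prod_insert ha]
    have hs := ih (fun i hi => ht₀ i (mem_insert_of_mem hi))
      (fun i hi => ht₁ i (mem_insert_of_mem hi))
    have hta₀ := ht₀ a (mem_insert_self a s)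
    have hta₁ := ht₁ a (mem_insert_self a s)
    have hs₀ : 0 ≤ ∑ i ∈ s, t i := sum_nonneg fun i hi => ht₀ i (mem_insert_of_mem hi)
    nlinarith

lemma abs_sum_sub_sum_le_of_one_sub_mul_le {ι : Type*} [Fintype ι] {p q : ι → ℝ} {B : ℝ}
    (hB : 0 ≤ B) (hp : ∑ i, p i = 1) (hq : ∑ i, q i = 1) (hq₀ : ∀ i, 0 ≤ q i)
    (hpq : ∀ i, (1 - B) * q i ≤ p i) (S : Finset ι) :
    |∑ i ∈ S, p i - ∑ i ∈ S, q i| ≤ B := by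
  classical
  have hlower : ∀ T : Finset ι, ∑ i ∈ T, q i - B ≤ ∑ i ∈ T, p i := fun T =>
    calc ∑ i ∈ T, q i - B ≤ ∑ i ∈ T, q i - B * ∑ i ∈ T, q i := by
          have : ∑ i ∈ T, q i ≤ 1 := hq ▸ sum_le_univ_sum_of_nonneg hq₀
          nlinarith
      _ = ∑ i ∈ T, (1 - B) * q i := by rw [← mul_sum]; ring
      _ ≤ ∑ i ∈ T, p i := sum_le_sum fun i _ => hpq i
  have hpS := sum_add_sum_compl S p
  have hqS := sum_add_sum_compl S q
  rw [abs_le]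
  constructor <;> linarith [hlower S, hlower Sᶜ]

lemma sum_fin_val_eq_mul_sub_one_div_two (m : ℕ) :
    ∑ i : Fin m, ((i : ℕ) : ℝ) = m * ((m : ℝ) - 1) / 2 := by
  rw [Fin.sum_univ_eq_sum_range (fun i => (i : ℝ))]
  induction m with
  | zero => simp
  | succ m ih => rw [sum_range_succ, ih]; push_cast; ring

lemma mul_one_sub_div_le_div_sub {p a N i : ℝ} (hp : 0 < p) (hi : 0 ≤ i) (hiN : i < N)
    (ha : a ≤ N * p) : p * (1 - a / (N * p)) ≤ (N * p - a) / (N - i) := by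
  have hN : 0 < N := hi.trans_lt hiN
  calc p * (1 - a / (N * p)) = (N * p - a) / N := by field_simp
    _ ≤ (N * p - a) / (N - i) := by
      exact div_le_div_of_nonneg_left (sub_nonneg.mpr ha) (by linarith) (by linarith)

section Urn

variable {k m n : ℕ}

def prevCount (x : Fin m → Fin k) (i : Fin m) : ℕ := #{j | j < i ∧ x j = x i}

lemma hypLaw_eq_prod (c : Fin k → ℕ) (x : Fin m → Fin k) :
    hypLaw (n := n) c x = ∏ i, ((c (x i) : ℝ) - prevCount x i) / ((n : ℝ) - (i : ℕ)) := rfl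

lemma prevCount_le (x : Fin m → Fin k) (i : Fin m) : prevCount x i ≤ i :=
  calc prevCount x i ≤ #{j | j < i} := card_le_card fun j => by simp +contextual
    _ = i := by rw [filter_gt_eq_Iio, Fin.card_Iio]

lemma prevCount_snoc_castSucc (y : Fin m → Fin k) (v : Fin k) (i : Fin m) :
    prevCount (Fin.snoc y v : Fin (m + 1) → Fin k) i.castSucc = prevCount y i := by
  rw [prevCount, prevCount, card_filter, card_filter, Fin.sum_univ_castSucc]
  simp [(Fin.castSucc_lt_last i).not_gt]

lemma prevCount_snoc_last (y : Fin m → Fin k) (v : Fin k) :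
    prevCount (Fin.snoc y v : Fin (m + 1) → Fin k) (Fin.last m) = #{j | y j = v} := by
  rw [prevCount, card_filter, card_filter, Fin.sum_univ_castSucc]
  simp [Fin.castSucc_lt_last]

lemma card_filter_snoc_eq (y : Fin m → Fin k) (v w : Fin k) :
    #{j | (Fin.snoc y v : Fin (m + 1) → Fin k) j = w} =
      #{j | y j = w} + if v = w then 1 else 0 := by
  rw [card_filter, card_filter, Fin.sum_univ_castSucc]
  simp

lemma sum_card_fiber_eq (y : Fin m → Fin k) : ∑ v, #{j | y j = v} = m := by
  simp [sum_card_fiberwise_eq_card_filter]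

lemma hypLaw_snoc (c : Fin k → ℕ) (y : Fin m → Fin k) (v : Fin k) :
    hypLaw (n := n) c (Fin.snoc y v) =
      hypLaw (n := n) c y * (((c v : ℝ) - #{j | y j = v}) / ((n : ℝ) - m)) := by
  simp only [hypLaw_eq_prod, Fin.prod_univ_castSucc, prevCount_snoc_castSucc, prevCount_snoc_last,
    Fin.snoc_castSucc, Fin.snoc_last, Fin.val_castSucc, Fin.val_last]

lemma sum_hypLaw_eq_one {c : Fin k → ℕ} (hc : ∑ v, (c v : ℝ) = n) (hm : m ≤ n) :
    ∑ x : Fin m → Fin k, hypLaw (n := n) c x = 1 := by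
  induction m with
  | zero => simp [hypLaw]
  | succ m ih =>
    have hnm : (n : ℝ) - m ≠ 0 := by
      have : (m : ℝ) < n := by exact_mod_cast hm
      linarith
    rw [← (Fin.snocEquiv fun _ => Fin k).sum_comp, Fintype.sum_prod_type, sum_comm]
    calc ∑ y : Fin m → Fin k, ∑ v, hypLaw (n := n) c (Fin.snoc y v)
        = ∑ y : Fin m → Fin k, hypLaw (n := n) c y *
            ((∑ v, ((c v : ℝ) - #{j | y j = v})) / ((n : ℝ) - m)) := by
          simp only [hypLaw_snoc, sum_div, mul_sum]
      _ = ∑ y : Fin m → Fin k, hypLaw (n := n) c y := by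
          refine sum_congr rfl fun y _ => ?_
          rw [sum_sub_distrib, hc, ← Nat.cast_sum, sum_card_fiber_eq, div_self hnm, mul_one]
      _ = 1 := ih (Nat.le_of_succ_le hm)

lemma card_le_of_hypLaw_ne_zero {c : Fin k → ℕ} {x : Fin m → Fin k}
    (h : hypLaw (n := n) c x ≠ 0) (v : Fin k) : #{j | x j = v} ≤ c v := by
  induction m generalizing v with
  | zero => simp
  | succ m ih =>
    induction x using Fin.snocCases with
    | snoc y w =>
      rw [hypLaw_snoc, mul_ne_zero_iff] at h
      obtain ⟨hy, hw⟩ := h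
      have hyw : #{j | y j = w} < c w := by
        have hne : #{j | y j = w} ≠ c w := fun he => hw (by simp [he])
        exact (ih hy w).lt_of_ne hne
      rw [card_filter_snoc_eq]
      split_ifs with hwv
      · exact hwv ▸ hyw
      · simpa using ih hy v

lemma hypLaw_nonneg (hm : m ≤ n) (c : Fin k → ℕ) (x : Fin m → Fin k) :
    0 ≤ hypLaw (n := n) c x := by
  induction m with
  | zero => simp [hypLaw]
  | succ m ih =>
    induction x using Fin.snocCases with
    | snoc y v =>
      rw [hypLaw_snoc]
      by_cases hy : hypLaw (n := n) c y = 0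
      · simp [hy]
      have hnm : (m : ℝ) < n := by exact_mod_cast hm
      have hcard : (#{j | y j = v} : ℝ) ≤ c v := by exact_mod_cast card_le_of_hypLaw_ne_zero hy v
      exact mul_nonneg (ih (Nat.le_of_succ_le hm) y) (div_nonneg (by linarith) (by linarith))

lemma sum_iidLaw_eq_one {P : Fin k → ℝ} (hP : ∑ v, P v = 1) :
    ∑ x : Fin m → Fin k, iidLaw P x = 1 := by
  simp only [iidLaw]
  rw [← Fintype.piFinset_univ, ← prod_univ_sum]
  simp [hP]

lemma iidLaw_nonneg {P : Fin k → ℝ} (hP : ∀ v, 0 ≤ P v) (x : Fin m → Fin k) :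
    0 ≤ iidLaw P x :=
  prod_nonneg fun i _ => hP (x i)

lemma one_sub_sum_mul_iidLaw_le_hypLaw (hm : m ≤ n) {P : Fin k → ℝ} (hP : ∀ v, 0 < P v)
    {c : Fin k → ℕ} (hc : ∀ v, (c v : ℝ) = n * P v) (x : Fin m → Fin k)
    (ht : ∑ i, (prevCount x i : ℝ) / (n * P (x i)) ≤ 1) :
    (1 - ∑ i, (prevCount x i : ℝ) / (n * P (x i))) * iidLaw P x ≤ hypLaw (n := n) c x := by
  set t : Fin m → ℝ := fun i => (prevCount x i : ℝ) / (n * P (x i))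
  have hi : ∀ i : Fin m, ((i : ℕ) : ℝ) < n := fun i => by exact_mod_cast i.isLt.trans_le hm
  have hden : ∀ i : Fin m, 0 < (n : ℝ) * P (x i) := fun i =>
    mul_pos ((Nat.cast_nonneg _).trans_lt (hi i)) (hP _)
  have ht₀ : ∀ i ∈ univ, 0 ≤ t i := fun i _ => div_nonneg (Nat.cast_nonneg _) (hden i).le
  have ht₁ : ∀ i ∈ univ, t i ≤ 1 := fun i hi => (single_le_sum ht₀ hi).trans ht
  calc (1 - ∑ i, t i) * iidLaw P x ≤ (∏ i, (1 - t i)) * ∏ i, P (x i) :=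
        mul_le_mul_of_nonneg_right (one_sub_sum_le_prod_one_sub univ ht₀ ht₁)
          (iidLaw_nonneg (fun v => (hP v).le) x)
    _ = ∏ i, P (x i) * (1 - t i) := by rw [← prod_mul_distrib]; simp_rw [mul_comm]
    _ ≤ hypLaw (n := n) c x := by
      rw [hypLaw_eq_prod]
      refine prod_le_prod (fun i _ => mul_nonneg (hP _).le (sub_nonneg.mpr (ht₁ i (mem_univ i))))
        fun i _ => ?_
      rw [hc]
      exact mul_one_sub_div_le_div_sub (hP _) (Nat.cast_nonneg _) (hi i)
        ((div_le_one (hden i)).mp (ht₁ i (mem_univ i)))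

lemma sum_prevCount_div_le (hn : 0 < n) {P : Fin k → ℝ} {pmin : ℝ} (hpmin : 0 < pmin)
    (hle : ∀ v, pmin ≤ P v) (x : Fin m → Fin k) :
    ∑ i, (prevCount x i : ℝ) / (n * P (x i)) ≤ m * ((m : ℝ) - 1) / (2 * n * pmin) :=
  calc ∑ i, (prevCount x i : ℝ) / (n * P (x i)) ≤ ∑ i : Fin m, ((i : ℕ) : ℝ) / (n * pmin) :=
        sum_le_sum fun i _ => div_le_div₀ (Nat.cast_nonneg _)
          (by exact_mod_cast prevCount_le x i) (by positivity) (by gcongr; exact hle _)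
    _ = m * ((m : ℝ) - 1) / (2 * n * pmin) := by
        rw [← sum_div, sum_fin_val_eq_mul_sub_one_div_two, div_div]; ring_nf

end Urn

/-- Hypergeometric coupling bound: sampling `m ≤ n` items without replacement
from an urn with composition `n·P` differs from i.i.d. sampling from `P` by at
most `m(m-1)/(2 n p_min)` in total variation. -/
theorem stmt_10 {k m n : ℕ} (hn : 0 < n) (hm : m ≤ n)
    (P : Fin k → ℝ) (hPpos : ∀ x, 0 < P x) (hPsum : ∑ x, P x = 1)
    (c : Fin k → ℕ) (hc : ∀ x, (c x : ℝ) = n * P x)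
    (pmin : ℝ) (hpmin : IsLeast (Set.range P) pmin) :
    ∀ S : Finset (Fin m → Fin k),
      |∑ x ∈ S, hypLaw (n := n) c x - ∑ x ∈ S, iidLaw P x| ≤
        (m : ℝ) * ((m : ℝ) - 1) / (2 * n * pmin) := by
  obtain ⟨⟨v₀, rfl⟩, hle⟩ := hpmin
  set B := (m : ℝ) * ((m : ℝ) - 1) / (2 * n * P v₀)
  have hB : 0 ≤ B := by
    have hmm : (0 : ℝ) ≤ m * ((m : ℝ) - 1) := by rcases m with _ | m <;> simp; positivity
    have hp₀ := hPpos v₀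
    exact div_nonneg hmm (by positivity)
  have hcsum : ∑ v, (c v : ℝ) = n := by simp only [hc, ← mul_sum, hPsum, mul_one]
  refine abs_sum_sub_sum_le_of_one_sub_mul_le hB (sum_hypLaw_eq_one hcsum hm)
    (sum_iidLaw_eq_one hPsum) (iidLaw_nonneg fun v => (hPpos v).le) fun x => ?_
  have htB := sum_prevCount_div_le hn (hPpos v₀) (fun v => hle ⟨v, rfl⟩) x
  rcases le_or_gt B 1 with hB₁ | hB₁
  · calc (1 - B) * iidLaw P x
        ≤ (1 - ∑ i, (prevCount x i : ℝ) / (n * P (x i))) * iidLaw P x :=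
          mul_le_mul_of_nonneg_right (by linarith) (iidLaw_nonneg (fun v => (hPpos v).le) x)
      _ ≤ hypLaw (n := n) c x := one_sub_sum_mul_iidLaw_le_hypLaw hm hPpos hc x (htB.trans hB₁)
  · exact (mul_nonpos_of_nonpos_of_nonneg (by linarith)
      (iidLaw_nonneg (fun v => (hPpos v).le) x)).trans (hypLaw_nonneg hm c x)
end
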